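/- arXiv:math/0311527 — 3 statements merged into one kernel-verified Lean document; each statement's English description precedes it below -/
import Mathlib

section
/- If u : [0,l] → ℝ is continuously differentiable with u(0) = 0 and u(l) = 0, then ∫₀ˡ |u(x)|² dx ≤ (l²/π²) ∫₀ˡ |u'(x)|² dx. -/
open Real intervalIntegral Set MeasureTheory Filter Function Topology

theorem scheefer_inequality (l : ℝ) (hl : 0 < l) (u u' : ℝ → ℝ)
    (hderiv : ∀ x ∈ Set.Icc 0 l, HasDerivAt u (u' x) x)
    (hcont : ContinuousOn u' (Set.Icc 0 l))
    (h0 : u 0 = 0) (hle : u l = 0) :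
    ∫ x in (0:ℝ)..l, (u x)^2 ≤ (l^2 / Real.pi^2) * ∫ x in (0:ℝ)..l, (u' x)^2 := by
  set k : ℝ := Real.pi / l with hk_def
  have hk : 0 < k := div_pos Real.pi_pos hl
  have hkl : k * l = Real.pi := by rw [hk_def]; field_simp
  set c : ℝ → ℝ := fun x => k * Real.cos (k * x) / Real.sin (k * x) with hc_def
  set h : ℝ → ℝ := fun x => u' x - c x * u x with hh_def
  set g : ℝ → ℝ := fun x => (u' x)^2 - k^2 * (u x)^2 - (h x)^2 with hg_def
  set F : ℝ → ℝ := fun x => c x * (u x)^2 with hF_def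
  -- sin positivity on Ioo
  have hsin_pos : ∀ x ∈ Ioo (0:ℝ) l, 0 < Real.sin (k * x) := by
    intro x hx
    apply Real.sin_pos_of_pos_of_lt_pi (mul_pos hk hx.1)
    calc k * x < k * l := by nlinarith [hx.2]
    _ = Real.pi := hkl
  have hu_cont : ContinuousOn u (Icc 0 l) :=
    fun x hx => (hderiv x hx).continuousAt.continuousWithinAt
  -- derivative of F on Ioo is g
  have hFderiv : ∀ x ∈ Ioo (0:ℝ) l, HasDerivAt F (g x) x := by
    intro x hx
    have hsx : Real.sin (k * x) ≠ 0 := (hsin_pos x hx).ne'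
    have h1 : HasDerivAt (fun y : ℝ => k * y) k x := by
      simpa using (hasDerivAt_id x).const_mul k
    have hsin' : HasDerivAt (fun y => Real.sin (k * y)) (Real.cos (k * x) * k) x :=
      (Real.hasDerivAt_sin (k * x)).comp x h1
    have hcos' : HasDerivAt (fun y => Real.cos (k * y)) (-Real.sin (k * x) * k) x :=
      (Real.hasDerivAt_cos (k * x)).comp x h1
    have hc' : HasDerivAt c
        ((k * (-Real.sin (k * x) * k) * Real.sin (k * x)
          - k * Real.cos (k * x) * (Real.cos (k * x) * k)) / (Real.sin (k * x))^2) x :=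
      (hcos'.const_mul k).div hsin' hsx
    have hu : HasDerivAt u (u' x) x := hderiv x (Ioo_subset_Icc_self hx)
    have hu2 : HasDerivAt (fun y => (u y)^2) (2 * u x ^ 1 * u' x) x := by
      simpa using hu.fun_pow 2
    have : HasDerivAt (fun y => c y * (u y)^2) _ x := hc'.fun_mul hu2
    convert this using 1
    have hpy : Real.sin (k * x) ^ 2 + Real.cos (k * x) ^ 2 = 1 := Real.sin_sq_add_cos_sq _
    simp only [hg_def, hh_def, hc_def]
    field_simp
    nlinarith [sq_nonneg (Real.sin (k*x)), sq_nonneg (u x), hpy]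
  -- limits of c * u at the endpoints
  have slope0 : Tendsto (fun x => u x / x) (𝓝[>] (0:ℝ)) (𝓝 (u' 0)) := by
    have := hasDerivAt_iff_tendsto_slope.1 (hderiv 0 ⟨le_refl _, hl.le⟩)
    have h2 := this.mono_left (nhdsWithin_mono _ (fun x hx => (mem_compl_singleton_iff).2 (ne_of_gt hx)))
    refine h2.congr (fun x => ?_)
    simp [slope, h0, div_eq_inv_mul]
  have slopesin0 : Tendsto (fun x => Real.sin (k * x) / x) (𝓝[>] (0:ℝ)) (𝓝 k) := by
    have hs : HasDerivAt (fun y => Real.sin (k * y)) (Real.cos (k * 0) * k) 0 :=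
      (Real.hasDerivAt_sin (k * 0)).comp 0 (by simpa using (hasDerivAt_id (0:ℝ)).const_mul k)
    have := hasDerivAt_iff_tendsto_slope.1 hs
    have h2 := this.mono_left (nhdsWithin_mono _ (fun x hx => (mem_compl_singleton_iff).2 (ne_of_gt hx)))
    have h3 : Tendsto (fun x => Real.sin (k * x) / x) (𝓝[>] (0:ℝ)) (𝓝 (Real.cos (k*0) * k)) := by
      refine h2.congr (fun x => ?_)
      simp [slope, div_eq_inv_mul]
    simpa using h3
  have cu0 : Tendsto (fun x => c x * u x) (𝓝[>] (0:ℝ)) (𝓝 (u' 0)) := by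
    have hinv : Tendsto (fun x => x / Real.sin (k * x)) (𝓝[>] (0:ℝ)) (𝓝 k⁻¹) := by
      simpa using slopesin0.inv₀ hk.ne'
    have hcos : Tendsto (fun x => k * Real.cos (k * x)) (𝓝[>] (0:ℝ)) (𝓝 (k * 1)) := by
      apply Tendsto.const_mul
      have : Tendsto (fun x : ℝ => Real.cos (k * x)) (𝓝 (0:ℝ)) (𝓝 (Real.cos (k * 0))) :=
        (Real.continuous_cos.comp (continuous_const.mul continuous_id)).tendsto 0
      simpa using this.mono_left nhdsWithin_le_nhds
    have hmain : Tendsto (fun x => (k * Real.cos (k * x)) * ((u x / x) * (x / Real.sin (k * x))))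
        (𝓝[>] (0:ℝ)) (𝓝 ((k * 1) * (u' 0 * k⁻¹))) := hcos.mul (slope0.mul hinv)
    have heq : ∀ᶠ x in 𝓝[>] (0:ℝ), (k * Real.cos (k * x)) * ((u x / x) * (x / Real.sin (k * x)))
        = c x * u x := by
      filter_upwards [Ioo_mem_nhdsGT_of_mem (Set.left_mem_Ico.2 hl)] with x hx
      have hx0 : x ≠ 0 := (hx.1).ne'
      have hsx : Real.sin (k * x) ≠ 0 := (hsin_pos x hx).ne'
      simp only [hc_def]
      field_simp
    have h5 := hmain.congr' heq
    rw [show (k * 1) * (u' 0 * k⁻¹) = u' 0 from by field_simp] at h5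
    exact h5
  -- limits at l
  have slopel : Tendsto (fun x => u x / (x - l)) (𝓝[<] l) (𝓝 (u' l)) := by
    have := hasDerivAt_iff_tendsto_slope.1 (hderiv l ⟨hl.le, le_refl _⟩)
    have h2 := this.mono_left (nhdsWithin_mono _ (fun x hx => (mem_compl_singleton_iff).2 (ne_of_lt hx)))
    refine h2.congr (fun x => ?_)
    simp [slope, hle, div_eq_inv_mul]
  have hskl : Real.sin (k * l) = 0 := by rw [hkl, Real.sin_pi]
  have hckl : Real.cos (k * l) = -1 := by rw [hkl, Real.cos_pi]
  have slopesinl : Tendsto (fun x => Real.sin (k * x) / (x - l)) (𝓝[<] l) (𝓝 (-k)) := by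
    have hs : HasDerivAt (fun y => Real.sin (k * y)) (Real.cos (k * l) * k) l :=
      (Real.hasDerivAt_sin (k * l)).comp l (by simpa using (hasDerivAt_id l).const_mul k)
    have := hasDerivAt_iff_tendsto_slope.1 hs
    have h2 := this.mono_left (nhdsWithin_mono _ (fun x hx => (mem_compl_singleton_iff).2 (ne_of_lt hx)))
    have h3 : Tendsto (fun x => Real.sin (k * x) / (x - l)) (𝓝[<] l) (𝓝 (Real.cos (k * l) * k)) := by
      refine h2.congr (fun x => ?_)
      simp [slope, hskl, div_eq_inv_mul]
    rw [hckl] at h3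
    simpa using h3
  have cul : Tendsto (fun x => c x * u x) (𝓝[<] l) (𝓝 (u' l)) := by
    have hinv : Tendsto (fun x => (x - l) / Real.sin (k * x)) (𝓝[<] l) (𝓝 (-k)⁻¹) := by
      simpa using slopesinl.inv₀ (neg_ne_zero.2 hk.ne')
    have hcos : Tendsto (fun x => k * Real.cos (k * x)) (𝓝[<] l) (𝓝 (k * (-1))) := by
      apply Tendsto.const_mul
      have : Tendsto (fun x : ℝ => Real.cos (k * x)) (𝓝 l) (𝓝 (Real.cos (k * l))) :=
        (Real.continuous_cos.comp (continuous_const.mul continuous_id)).tendsto l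
      rw [hckl] at this
      exact this.mono_left nhdsWithin_le_nhds
    have hmain : Tendsto (fun x => (k * Real.cos (k * x)) * ((u x / (x - l)) * ((x - l) / Real.sin (k * x))))
        (𝓝[<] l) (𝓝 ((k * (-1)) * (u' l * (-k)⁻¹))) := hcos.mul (slopel.mul hinv)
    have heq : ∀ᶠ x in 𝓝[<] l, (k * Real.cos (k * x)) * ((u x / (x - l)) * ((x - l) / Real.sin (k * x)))
        = c x * u x := by
      filter_upwards [Ioo_mem_nhdsLT_of_mem (Set.right_mem_Ioc.2 hl)] with x hx
      have hx0 : x - l ≠ 0 := sub_ne_zero.2 hx.2.ne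
      have hsx : Real.sin (k * x) ≠ 0 := (hsin_pos x hx).ne'
      simp only [hc_def]
      field_simp
    have h5 := hmain.congr' heq
    rw [show (k * (-1)) * (u' l * (-k)⁻¹) = u' l from by field_simp] at h5
    exact h5
  -- u' limits at endpoints
  have hup0 : Tendsto u' (𝓝[>] (0:ℝ)) (𝓝 (u' 0)) := by
    have := (hcont 0 ⟨le_refl _, hl.le⟩).tendsto
    rw [← nhdsWithin_Ioc_eq_nhdsGT hl]
    exact this.mono_left (nhdsWithin_mono _ Ioc_subset_Icc_self)
  have hupl : Tendsto u' (𝓝[<] l) (𝓝 (u' l)) := by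
    have := (hcont l ⟨hl.le, le_refl _⟩).tendsto
    rw [← nhdsWithin_Ico_eq_nhdsLT hl]
    exact this.mono_left (nhdsWithin_mono _ Ico_subset_Icc_self)
  -- limits of h and F at endpoints
  have htend0 : Tendsto h (𝓝[>] (0:ℝ)) (𝓝 0) := by
    have := hup0.sub cu0
    simpa [hh_def] using this
  have htendl : Tendsto h (𝓝[<] l) (𝓝 0) := by
    have := hupl.sub cul
    simpa [hh_def] using this
  have hu_t0 : Tendsto u (𝓝[>] (0:ℝ)) (𝓝 0) := by
    have := (hderiv 0 ⟨le_refl _, hl.le⟩).continuousAt.tendsto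
    rw [h0] at this
    exact this.mono_left nhdsWithin_le_nhds
  have hu_tl : Tendsto u (𝓝[<] l) (𝓝 0) := by
    have := (hderiv l ⟨hl.le, le_refl _⟩).continuousAt.tendsto
    rw [hle] at this
    exact this.mono_left nhdsWithin_le_nhds
  have Ftend0 : Tendsto F (𝓝[>] (0:ℝ)) (𝓝 0) := by
    have := cu0.mul hu_t0
    simp only [mul_zero] at this
    refine this.congr (fun x => ?_)
    simp only [hF_def]; ring
  have Ftendl : Tendsto F (𝓝[<] l) (𝓝 0) := by
    have := cul.mul hu_tl
    simp only [mul_zero] at this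
    refine this.congr (fun x => ?_)
    simp only [hF_def]; ring
  -- continuity of h on Ioo
  have hh_cont : ContinuousOn h (Ioo 0 l) := by
    intro x hx
    apply ContinuousAt.continuousWithinAt
    have hsx : Real.sin (k * x) ≠ 0 := (hsin_pos x hx).ne'
    have hu'c : ContinuousAt u' x := hcont.continuousAt (Icc_mem_nhds hx.1 hx.2)
    have hcc : ContinuousAt c x := by
      apply ContinuousAt.div
      · exact (continuous_const.mul (Real.continuous_cos.comp (continuous_const.mul continuous_id))).continuousAt
      · exact (Real.continuous_sin.comp (continuous_const.mul continuous_id)).continuousAt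
      · exact hsx
    exact hu'c.sub (hcc.mul (hderiv x (Ioo_subset_Icc_self hx)).continuousAt)
  -- bound for h on Ioo via a continuous extension
  set H : ℝ → ℝ := Function.update (Function.update h 0 0) l 0 with hH_def
  have Hcont : ContinuousOn H (Icc 0 l) := by
    rw [hH_def, continuousOn_update_iff, continuousOn_update_iff, Icc_sdiff_right, Ico_sdiff_left]
    refine ⟨⟨hh_cont, ?_⟩, ?_⟩
    · exact fun _ => htend0.mono_left (nhdsWithin_mono _ Ioo_subset_Ioi_self)
    · rintro -
      refine (htendl.congr' ?_).mono_left (nhdsWithin_mono _ Ico_subset_Iio_self)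
      filter_upwards [Ioo_mem_nhdsLT_of_mem (Set.right_mem_Ioc.2 hl)] with z hz using
        (Function.update_of_ne hz.1.ne' _ _).symm
  obtain ⟨M, hM⟩ := isCompact_Icc.exists_bound_of_continuousOn Hcont
  have hbound : ∀ x ∈ Ioo (0:ℝ) l, |h x| ≤ M := by
    intro x hx
    have : H x = h x := by
      rw [hH_def, Function.update_of_ne hx.2.ne, Function.update_of_ne hx.1.ne']
    have := hM x (Ioo_subset_Icc_self hx)
    rwa [Real.norm_eq_abs, ‹H x = h x›] at this
  -- integrability of h^2
  have h2int : IntervalIntegrable (fun x => (h x)^2) volume 0 l := by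
    rw [intervalIntegrable_iff_integrableOn_Ioo_of_le hl.le]
    refine ⟨(hh_cont.pow 2).aestronglyMeasurable measurableSet_Ioo,
      MeasureTheory.HasFiniteIntegral.restrict_of_bounded (C := M^2)
        (by rw [Real.volume_Ioo]; exact ENNReal.ofReal_lt_top) ?_⟩
    rw [ae_restrict_iff' measurableSet_Ioo]
    filter_upwards with x hx
    rw [Real.norm_eq_abs, abs_pow, sq_abs, ← sq_abs (h x)]
    exact pow_le_pow_left₀ (abs_nonneg _) (hbound x hx) 2
  -- integrability of the continuous part
  have iu' : IntervalIntegrable (fun x => (u' x)^2) volume 0 l :=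
    ((hcont.pow 2).mono (by rw [uIcc_of_le hl.le])).intervalIntegrable
  have iu : IntervalIntegrable (fun x => k^2 * (u x)^2) volume 0 l :=
    ((continuousOn_const.mul (hu_cont.pow 2)).mono (by rw [uIcc_of_le hl.le])).intervalIntegrable
  have ip : IntervalIntegrable (fun x => (u' x)^2 - k^2 * (u x)^2) volume 0 l := iu'.sub iu
  have ig : IntervalIntegrable g volume 0 l := ip.sub h2int
  -- FTC: integral of g is 0
  have intg : ∫ x in (0:ℝ)..l, g x = 0 := by
    have := intervalIntegral.integral_eq_sub_of_hasDerivAt_of_tendsto hl hFderiv ig Ftend0 Ftendl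
    simpa using this
  -- key nonnegativity
  have hsum : ∫ x in (0:ℝ)..l, ((u' x)^2 - k^2 * (u x)^2)
      = (∫ x in (0:ℝ)..l, g x) + ∫ x in (0:ℝ)..l, (h x)^2 := by
    rw [← intervalIntegral.integral_add ig h2int]
    apply intervalIntegral.integral_congr
    intro x _
    simp only [hg_def]; ring
  have hnn : 0 ≤ ∫ x in (0:ℝ)..l, (h x)^2 :=
    intervalIntegral.integral_nonneg hl.le (fun x _ => sq_nonneg _)
  have key : 0 ≤ ∫ x in (0:ℝ)..l, ((u' x)^2 - k^2 * (u x)^2) := by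
    rw [hsum, intg, zero_add]; exact hnn
  have hsplit : ∫ x in (0:ℝ)..l, ((u' x)^2 - k^2 * (u x)^2)
      = (∫ x in (0:ℝ)..l, (u' x)^2) - k^2 * ∫ x in (0:ℝ)..l, (u x)^2 := by
    rw [intervalIntegral.integral_sub iu' iu, intervalIntegral.integral_const_mul]
  rw [hsplit] at key
  have hk2 : k^2 * ∫ x in (0:ℝ)..l, (u x)^2 ≤ ∫ x in (0:ℝ)..l, (u' x)^2 := by linarith
  have hfin : (∫ x in (0:ℝ)..l, (u x)^2) = (k^2)⁻¹ * (k^2 * ∫ x in (0:ℝ)..l, (u x)^2) := by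
    field_simp
  rw [hfin, show l^2 / Real.pi^2 = (k^2)⁻¹ from by rw [hk_def, div_pow, inv_div]]
  exact mul_le_mul_of_nonneg_left hk2 (by positivity)
end

section
/- Let l, a > 0, δ > 0, b ≥ 0, u continuously differentiable on [0,l] with u(0)=u(l)=0, v square-integrable. Define E = (1/2)∫₀ˡ (v² + a²(u')²) dx + (b/4)(∫₀ˡ (u')² dx)² and G = ∫₀ˡ (u·v + δ·u²) dx. Then |G| ≤ μ₀·E where μ₀ = (l/(πa))·(1 + 2δl/(πa)). -/
set_option maxHeartbeats 1000000
open Real intervalIntegral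

lemma mul_cos_le_sin' {t : ℝ} (h0 : 0 < t) (hπ : t < Real.pi) : t * Real.cos t ≤ Real.sin t := by
  rcases lt_trichotomy t (Real.pi/2) with h | h | h
  · have hc : 0 < Real.cos t := Real.cos_pos_of_mem_Ioo ⟨by linarith [Real.pi_pos], h⟩
    have ht := Real.lt_tan h0 h
    rw [Real.tan_eq_sin_div_cos] at ht
    have h2 : t * Real.cos t < (Real.sin t / Real.cos t) * Real.cos t :=
      mul_lt_mul_of_pos_right ht hc
    rw [div_mul_cancel₀ _ (ne_of_gt hc)] at h2
    exact h2.le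
  · rw [h]; simp [Real.cos_pi_div_two, Real.sin_pi_div_two]
  · have hc : Real.cos t ≤ 0 := Real.cos_nonpos_of_pi_div_two_le_of_le h.le (by linarith)
    have hs : 0 < Real.sin t := Real.sin_pos_of_pos_of_lt_pi h0 hπ
    nlinarith

noncomputable def phiAux (k x : ℝ) : ℝ := k * (Real.cos (k*x) / Real.sin (k*x))

lemma hasDerivAt_phiAux {k x : ℝ} (hs : Real.sin (k*x) ≠ 0) :
    HasDerivAt (phiAux k) (-(k^2) / (Real.sin (k*x))^2) x := by
  have hkx : HasDerivAt (fun y : ℝ => k * y) k x := by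
    simpa using (hasDerivAt_id x).const_mul k
  have hcos : HasDerivAt (fun y => Real.cos (k*y)) (-Real.sin (k*x) * k) x :=
    (Real.hasDerivAt_cos (k*x)).comp x hkx
  have hsinD : HasDerivAt (fun y => Real.sin (k*y)) (Real.cos (k*x) * k) x :=
    (Real.hasDerivAt_sin (k*x)).comp x hkx
  have hdiv := (hcos.div hsinD hs).const_mul k
  have hnum : -Real.sin (k*x) * k * Real.sin (k*x) - Real.cos (k*x) * (Real.cos (k*x) * k)
      = -k := by linear_combination (-k) * (Real.sin_sq_add_cos_sq (k*x))
  rw [hnum] at hdiv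
  have : k * (-k / Real.sin (k*x)^2) = -(k^2) / (Real.sin (k*x))^2 := by ring
  rw [this] at hdiv
  exact hdiv

lemma phiAux_sq {k t : ℝ} (hs : Real.sin t ≠ 0) :
    (k * (Real.cos t / Real.sin t))^2 = k^2/(Real.sin t)^2 - k^2 := by
  field_simp
  linear_combination k^2 * (Real.sin_sq_add_cos_sq t)

lemma wirtinger' (l : ℝ) (hl : 0 < l) (u u' : ℝ → ℝ)
    (hderiv : ∀ x ∈ Set.Icc 0 l, HasDerivAt u (u' x) x)
    (hcont : ContinuousOn u' (Set.Icc 0 l))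
    (h0 : u 0 = 0) (hle : u l = 0) :
    (∫ x in (0:ℝ)..l, (u x)^2) ≤ (l/Real.pi)^2 * ∫ x in (0:ℝ)..l, (u' x)^2 := by
  have hpi := Real.pi_pos
  set k : ℝ := Real.pi / l with hkdef
  have hk : 0 < k := div_pos hpi hl
  have hkl : k * l = Real.pi := div_mul_cancel₀ _ hl.ne'
  have hu_cont : ContinuousOn u (Set.Icc 0 l) := fun x hx =>
    (hderiv x hx).continuousAt.continuousWithinAt
  obtain ⟨M, hM⟩ := isCompact_Icc.exists_bound_of_continuousOn hcont
  have hM0 : 0 ≤ M := le_trans (norm_nonneg _) (hM 0 ⟨le_refl 0, hl.le⟩)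
  have hub : ∀ x ∈ Set.Icc (0:ℝ) l, |u x| ≤ M * x ∧ |u x| ≤ M * (l - x) := by
    intro x hx
    obtain ⟨hx0, hxl⟩ := hx
    constructor
    · have hint : IntervalIntegrable u' MeasureTheory.volume 0 x :=
        (hcont.mono (by rw [Set.uIcc_of_le hx0]; exact Set.Icc_subset_Icc le_rfl hxl)).intervalIntegrable
      have hftc : ∫ t in (0:ℝ)..x, u' t = u x - u 0 :=
        integral_eq_sub_of_hasDerivAt (fun t ht => hderiv t (by
          rw [Set.uIcc_of_le hx0] at ht; exact ⟨ht.1, le_trans ht.2 hxl⟩)) hint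
      have hb := intervalIntegral.norm_integral_le_of_norm_le_const
        (C := M) (f := u') (a := 0) (b := x) (fun t ht => by
          rw [Set.uIoc_of_le hx0] at ht; exact hM t ⟨ht.1.le, le_trans ht.2 hxl⟩)
      rw [hftc, h0, sub_zero, Real.norm_eq_abs, sub_zero, abs_of_nonneg hx0] at hb
      exact hb
    · have hint : IntervalIntegrable u' MeasureTheory.volume x l :=
        (hcont.mono (by rw [Set.uIcc_of_le hxl]; exact Set.Icc_subset_Icc hx0 le_rfl)).intervalIntegrable
      have hftc : ∫ t in x..l, u' t = u l - u x :=
        integral_eq_sub_of_hasDerivAt (fun t ht => hderiv t (by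
          rw [Set.uIcc_of_le hxl] at ht; exact ⟨le_trans hx0 ht.1, ht.2⟩)) hint
      have hb := intervalIntegral.norm_integral_le_of_norm_le_const
        (C := M) (f := u') (a := x) (b := l) (fun t ht => by
          rw [Set.uIoc_of_le hxl] at ht; exact hM t ⟨le_trans hx0 ht.1.le, ht.2⟩)
      rw [hftc, hle, Real.norm_eq_abs, zero_sub, abs_neg,
        abs_of_nonneg (by linarith : (0:ℝ) ≤ l - x)] at hb
      exact hb
  set I1 : ℝ := ∫ x in (0:ℝ)..l, (u' x)^2 with hI1
  set I2 : ℝ := ∫ x in (0:ℝ)..l, (u x)^2 with hI2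
  have hu2c : ContinuousOn (fun x => (u x)^2) (Set.Icc 0 l) := hu_cont.pow 2
  have hu'2c : ContinuousOn (fun x => (u' x)^2) (Set.Icc 0 l) := hcont.pow 2
  have key : ∀ ε : ℝ, 0 < ε → ε < l/2 →
      k^2 * I2 ≤ I1 + (2*M^2 + k^2*M^2*l^2/2) * ε := by
    intro ε hε hεl
    have hs0 : 0 < ε := hε
    have hse : ε ≤ l - ε := by linarith
    have hel : l - ε < l := by linarith
    have hsubset : Set.Icc ε (l-ε) ⊆ Set.Icc 0 l := Set.Icc_subset_Icc hs0.le hel.le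
    have hsin : ∀ x ∈ Set.Icc ε (l-ε), 0 < Real.sin (k*x) := by
      intro x hx
      apply Real.sin_pos_of_pos_of_lt_pi
      · exact mul_pos hk (lt_of_lt_of_le hs0 hx.1)
      · calc k * x ≤ k * (l-ε) := mul_le_mul_of_nonneg_left hx.2 hk.le
          _ < k * l := mul_lt_mul_of_pos_left hel hk
          _ = Real.pi := hkl
    have hφd : ∀ x ∈ Set.Icc ε (l-ε), HasDerivAt (phiAux k) (-(k^2) / (Real.sin (k*x))^2) x :=
      fun x hx => hasDerivAt_phiAux (ne_of_gt (hsin x hx))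
    have hφcont : ContinuousOn (phiAux k) (Set.Icc ε (l-ε)) :=
      continuousOn_const.mul
        (((Real.continuous_cos.comp (continuous_const.mul continuous_id)).continuousOn).div
          ((Real.continuous_sin.comp (continuous_const.mul continuous_id)).continuousOn)
          (fun x hx => ne_of_gt (hsin x hx)))
    have hF'cont : ContinuousOn
        (fun x => 2*u x*u' x*(phiAux k x) + (u x)^2 * (-(k^2) / (Real.sin (k*x))^2))
        (Set.Icc ε (l-ε)) := by
      apply ContinuousOn.add
      · exact ((continuousOn_const.mul (hu_cont.mono hsubset)).mul (hcont.mono hsubset)).mul hφcont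
      · exact ((hu_cont.mono hsubset).pow 2).mul
          (continuousOn_const.div
            (((Real.continuous_sin.comp (continuous_const.mul continuous_id)).continuousOn).pow 2)
            (fun x hx => pow_ne_zero 2 (ne_of_gt (hsin x hx))))
    have hF'int : IntervalIntegrable
        (fun x => 2*u x*u' x*(phiAux k x) + (u x)^2 * (-(k^2) / (Real.sin (k*x))^2))
        MeasureTheory.volume ε (l-ε) :=
      (hF'cont.mono (by rw [Set.uIcc_of_le hse])).intervalIntegrable
    have hFTC : (∫ x in ε..(l-ε), (2*u x*u' x*(phiAux k x) + (u x)^2 * (-(k^2) / (Real.sin (k*x))^2)))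
        = (u (l-ε))^2 * phiAux k (l-ε) - (u ε)^2 * phiAux k ε := by
      apply integral_eq_sub_of_hasDerivAt (f := fun x => (u x)^2 * phiAux k x)
      · intro x hx
        rw [Set.uIcc_of_le hse] at hx
        have h1 : HasDerivAt (fun y => (u y)^2) (2 * u x * u' x) x := by
          have := (hderiv x (hsubset hx)).pow 2
          show HasDerivAt (u^2) _ x
          simpa [mul_comm, mul_assoc, mul_left_comm] using this
        have h2 := h1.mul (hφd x hx)
        convert h2 using 1
        all_goals rfl
      · exact hF'int
    have hintu'2 : IntervalIntegrable (fun x => (u' x)^2) MeasureTheory.volume ε (l-ε) :=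
      ((hu'2c.mono hsubset).mono (by rw [Set.uIcc_of_le hse])).intervalIntegrable
    have hintu2 : IntervalIntegrable (fun x => (u x)^2) MeasureTheory.volume ε (l-ε) :=
      ((hu2c.mono hsubset).mono (by rw [Set.uIcc_of_le hse])).intervalIntegrable
    have hid : ∫ x in ε..(l-ε), (u' x - u x * phiAux k x)^2
        = (∫ x in ε..(l-ε), (u' x)^2)
          - (∫ x in ε..(l-ε), (2*u x*u' x*(phiAux k x) + (u x)^2 * (-(k^2) / (Real.sin (k*x))^2)))
          - k^2 * ∫ x in ε..(l-ε), (u x)^2 := by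
      have hcong : Set.EqOn (fun x => (u' x - u x * phiAux k x)^2)
          (fun x => (u' x)^2
            - (2*u x*u' x*(phiAux k x) + (u x)^2 * (-(k^2) / (Real.sin (k*x))^2))
            - k^2 * (u x)^2) (Set.uIcc ε (l-ε)) := by
        intro x hx
        rw [Set.uIcc_of_le hse] at hx
        have hs' : Real.sin (k*x) ≠ 0 := ne_of_gt (hsin x hx)
        have h := phiAux_sq (k := k) hs'
        simp only [phiAux]
        linear_combination (u x)^2 * h
      rw [intervalIntegral.integral_congr hcong]
      rw [intervalIntegral.integral_sub (hintu'2.sub hF'int) (hintu2.const_mul (k^2)),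
        intervalIntegral.integral_sub hintu'2 hF'int, intervalIntegral.integral_const_mul]
    have hpos : 0 ≤ ∫ x in ε..(l-ε), (u' x - u x * phiAux k x)^2 :=
      intervalIntegral.integral_nonneg hse (fun x _ => sq_nonneg _)
    have hke : k * (l-ε) = Real.pi - k * ε := by rw [mul_sub, hkl]
    have hφe : phiAux k (l-ε) = - phiAux k ε := by
      simp only [phiAux]
      rw [hke, Real.cos_pi_sub, Real.sin_pi_sub]
      ring
    have hks0 : 0 < k * ε := mul_pos hk hs0
    have hksπ : k * ε < Real.pi := by
      calc k * ε < k * l := mul_lt_mul_of_pos_left (by linarith) hk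
        _ = Real.pi := hkl
    have hsins : 0 < Real.sin (k*ε) := Real.sin_pos_of_pos_of_lt_pi hks0 hksπ
    have hφs : phiAux k ε ≤ 1 / ε := by
      have hmcs := mul_cos_le_sin' hks0 hksπ
      show k * (Real.cos (k*ε) / Real.sin (k*ε)) ≤ 1/ε
      rw [mul_div_assoc', div_le_div_iff₀ hsins hs0]
      nlinarith only [hmcs]
    have hus : |u ε| ≤ M * ε := (hub ε ⟨hs0.le, by linarith⟩).1
    have hue : |u (l-ε)| ≤ M * ε := by
      have := (hub (l-ε) ⟨by linarith, hel.le⟩).2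
      simpa using this
    have hus2 : (u ε)^2 ≤ M^2 * ε^2 := by nlinarith only [hus, abs_nonneg (u ε), sq_abs (u ε)]
    have hue2 : (u (l-ε))^2 ≤ M^2 * ε^2 := by nlinarith only [hue, abs_nonneg (u (l-ε)), sq_abs (u (l-ε))]
    have hbd : -(2*M^2*ε) ≤ (u (l-ε))^2 * phiAux k (l-ε) - (u ε)^2 * phiAux k ε := by
      rw [hφe]
      have hsum : ((u (l-ε))^2 + (u ε)^2) * phiAux k ε ≤ ((u (l-ε))^2 + (u ε)^2) * (1/ε) :=
        mul_le_mul_of_nonneg_left hφs (by positivity)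
      have h2 : ((u (l-ε))^2 + (u ε)^2) * (1/ε) ≤ 2*M^2*ε := by
        rw [mul_one_div, div_le_iff₀ hε]
        have hsq : ε*ε = ε^2 := (sq ε).symm
        nlinarith only [hus2, hue2, hsq, hε]
      linarith only [hsum, h2]
    have hmid : k^2 * (∫ x in ε..(l-ε), (u x)^2) ≤ (∫ x in ε..(l-ε), (u' x)^2) + 2*M^2*ε := by
      rw [hFTC] at hid
      linarith only [hpos, hid, hbd]
    have hint0s : IntervalIntegrable (fun x => (u' x)^2) MeasureTheory.volume 0 ε :=
      ((hu'2c.mono (Set.Icc_subset_Icc le_rfl (by linarith : ε ≤ l))).mono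
        (by rw [Set.uIcc_of_le hs0.le])).intervalIntegrable
    have hintel : IntervalIntegrable (fun x => (u' x)^2) MeasureTheory.volume (l-ε) l :=
      ((hu'2c.mono (Set.Icc_subset_Icc (by linarith : (0:ℝ) ≤ l - ε) le_rfl)).mono
        (by rw [Set.uIcc_of_le hel.le])).intervalIntegrable
    have hint0s2 : IntervalIntegrable (fun x => (u x)^2) MeasureTheory.volume 0 ε :=
      ((hu2c.mono (Set.Icc_subset_Icc le_rfl (by linarith : ε ≤ l))).mono
        (by rw [Set.uIcc_of_le hs0.le])).intervalIntegrable
    have hintel2 : IntervalIntegrable (fun x => (u x)^2) MeasureTheory.volume (l-ε) l :=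
      ((hu2c.mono (Set.Icc_subset_Icc (by linarith : (0:ℝ) ≤ l - ε) le_rfl)).mono
        (by rw [Set.uIcc_of_le hel.le])).intervalIntegrable
    have hI1split : I1 = (∫ x in (0:ℝ)..ε, (u' x)^2) + (∫ x in ε..(l-ε), (u' x)^2)
        + (∫ x in (l-ε)..l, (u' x)^2) := by
      rw [hI1, ← intervalIntegral.integral_add_adjacent_intervals (hint0s.trans hintu'2) hintel,
        ← intervalIntegral.integral_add_adjacent_intervals hint0s hintu'2]
    have hI2split : I2 = (∫ x in (0:ℝ)..ε, (u x)^2) + (∫ x in ε..(l-ε), (u x)^2)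
        + (∫ x in (l-ε)..l, (u x)^2) := by
      rw [hI2, ← intervalIntegral.integral_add_adjacent_intervals (hint0s2.trans hintu2) hintel2,
        ← intervalIntegral.integral_add_adjacent_intervals hint0s2 hintu2]
    have h1a : 0 ≤ ∫ x in (0:ℝ)..ε, (u' x)^2 :=
      intervalIntegral.integral_nonneg hs0.le (fun x _ => sq_nonneg _)
    have h1b : 0 ≤ ∫ x in (l-ε)..l, (u' x)^2 :=
      intervalIntegral.integral_nonneg hel.le (fun x _ => sq_nonneg _)
    have h2a : (∫ x in (0:ℝ)..ε, (u x)^2) ≤ M^2 * ε^2 * ε := by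
      have hmono : (∫ x in (0:ℝ)..ε, (u x)^2) ≤ ∫ _x in (0:ℝ)..ε, M^2*ε^2 := by
        apply intervalIntegral.integral_mono_on hs0.le hint0s2 intervalIntegrable_const
        intro x hx
        have h := (hub x ⟨hx.1, by linarith [hx.2]⟩).1
        have habs : |u x| ≤ M * ε := le_trans h (mul_le_mul_of_nonneg_left hx.2 hM0)
        nlinarith only [habs, abs_nonneg (u x), sq_abs (u x)]
      rw [intervalIntegral.integral_const, smul_eq_mul, sub_zero] at hmono
      linarith only [hmono]
    have h2b : (∫ x in (l-ε)..l, (u x)^2) ≤ M^2 * ε^2 * ε := by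
      have hmono : (∫ x in (l-ε)..l, (u x)^2) ≤ ∫ _x in (l-ε)..l, M^2*ε^2 := by
        apply intervalIntegral.integral_mono_on hel.le hintel2 intervalIntegrable_const
        intro x hx
        have h := (hub x ⟨by linarith [hx.1], hx.2⟩).2
        have habs : |u x| ≤ M * ε := le_trans h (mul_le_mul_of_nonneg_left (by linarith only [hx.1] : l - x ≤ ε) hM0)
        nlinarith only [habs, abs_nonneg (u x), sq_abs (u x)]
      rw [intervalIntegral.integral_const, smul_eq_mul] at hmono
      nlinarith only [hmono]
    have hεsq : ε^2 ≤ l^2/4 := by nlinarith only [hε, hεl]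
    have hmid2 : (∫ x in ε..(l-ε), (u' x)^2) ≤ I1 := by rw [hI1split]; linarith only [h1a, h1b]
    have hk2 : (0:ℝ) ≤ k^2 := sq_nonneg k
    calc k^2 * I2 = k^2 * (∫ x in (0:ℝ)..ε, (u x)^2) + k^2 * (∫ x in ε..(l-ε), (u x)^2)
          + k^2 * (∫ x in (l-ε)..l, (u x)^2) := by rw [hI2split]; ring
      _ ≤ k^2 * (∫ x in ε..(l-ε), (u x)^2) + k^2 * (2 * (M^2*ε^2*ε)) := by
          linarith only [mul_le_mul_of_nonneg_left h2a hk2, mul_le_mul_of_nonneg_left h2b hk2]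
      _ ≤ (∫ x in ε..(l-ε), (u' x)^2) + 2*M^2*ε + k^2 * (2 * (M^2*ε^2*ε)) := by linarith only [hmid]
      _ ≤ I1 + 2*M^2*ε + k^2*M^2*l^2/2*ε := by
          have h5 : (0:ℝ) ≤ 2*k^2*M^2*ε := mul_nonneg (by positivity) hε.le
          have h6 := mul_le_mul_of_nonneg_left hεsq h5
          nlinarith only [hmid2, h6]
      _ = I1 + (2*M^2 + k^2*M^2*l^2/2) * ε := by ring
  have hfin : k^2 * I2 ≤ I1 := by
    apply le_of_forall_pos_le_add
    intro η hη
    have hC0nn : (0:ℝ) ≤ 2*M^2 + k^2*M^2*l^2/2 := by positivity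
    set C0 : ℝ := 2*M^2 + k^2*M^2*l^2/2 with hC0
    set ε : ℝ := min (l/4) (η/(C0+1)) with hεdef
    have hε0 : 0 < ε := lt_min (by linarith) (by positivity)
    have hεl : ε < l/2 := lt_of_le_of_lt (min_le_left _ _) (by linarith)
    have hkey := key ε hε0 hεl
    have hC0ε : C0 * ε ≤ η := by
      have h1 : ε ≤ η/(C0+1) := min_le_right _ _
      have h2 : C0 * ε ≤ C0 * (η/(C0+1)) := mul_le_mul_of_nonneg_left h1 hC0nn
      have h3 : C0 * (η/(C0+1)) ≤ η := by
        rw [mul_div_assoc', div_le_iff₀ (by linarith)]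
        nlinarith only [hη, hC0nn]
      exact le_trans h2 h3
    calc k^2 * I2 ≤ I1 + C0 * ε := by rw [hC0]; exact hkey
      _ ≤ I1 + η := by linarith only [hC0ε]
  have hkpos : (0:ℝ) < k^2 := by positivity
  have h2 : I2 ≤ I1 / k^2 := by
    rw [le_div_iff₀ hkpos]
    nlinarith only [hfin]
  have hinv : (l/Real.pi) = 1/k := by rw [hkdef, one_div_div]
  have heq : (l/Real.pi)^2 * I1 = I1 / k^2 := by rw [hinv]; ring
  linarith only [heq ▸ h2]

lemma young' (t p q : ℝ) (ht : 0 < t) : |p*q| ≤ t/2*p^2 + 1/(2*t)*q^2 := by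
  rw [abs_mul]
  have h2 : 0 ≤ t^2*p^2 + q^2 - 2*t*(|p| * |q|) := by
    nlinarith [sq_nonneg (t*|p| - |q|), sq_abs p, sq_abs q]
  have h3 : 0 ≤ (t^2*p^2 + q^2 - 2*t*(|p| * |q|))/(2*t) := div_nonneg h2 (by positivity)
  have h4 : (t^2*p^2 + q^2 - 2*t*(|p| * |q|))/(2*t) = t/2*p^2 + 1/(2*t)*q^2 - |p| * |q| := by
    field_simp
  linarith [h4 ▸ h3]

lemma final_algebra (P a δ b I1 Iv : ℝ) (hP : 0 < P) (ha : 0 < a) (hδ : 0 < δ) (hb : 0 ≤ b)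
    (hI1 : 0 ≤ I1) (hIv : 0 ≤ Iv) :
    ((a/P)/2 + δ) * (P^2*I1) + (1/(2*(a/P)))*Iv
      ≤ (P/a)*(1+2*δ*P/a)*(1/2*(Iv + a^2*I1) + b/4*I1^2) := by
  have key : (P/a)*(1+2*δ*P/a)*(1/2*(Iv + a^2*I1) + b/4*I1^2)
      - (((a/P)/2 + δ) * (P^2*I1) + (1/(2*(a/P)))*Iv)
      = (P*b/(4*a))*I1^2 + (δ*P^2/a^2)*Iv + (δ*b*P^2/(2*a^2))*I1^2 := by
    field_simp
    ring
  have h1 : 0 ≤ (P*b/(4*a))*I1^2 := by positivity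
  have h2 : 0 ≤ (δ*P^2/a^2)*Iv := by positivity
  have h3 : 0 ≤ (δ*b*P^2/(2*a^2))*I1^2 := by positivity
  linarith [key]

theorem G_energy_bound (l a b δ : ℝ) (hl : 0 < l) (ha : 0 < a) (hδ : 0 < δ) (hb : 0 ≤ b)
    (u u' v : ℝ → ℝ)
    (hderiv : ∀ x ∈ Set.Icc 0 l, HasDerivAt u (u' x) x)
    (hcont : ContinuousOn u' (Set.Icc 0 l))
    (hv2 : IntervalIntegrable (fun x => (v x)^2) MeasureTheory.volume 0 l)
    (huv : IntervalIntegrable (fun x => u x * v x) MeasureTheory.volume 0 l)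
    (h0 : u 0 = 0) (hle : u l = 0)
    (E G μ₀ : ℝ)
    (hE : E = (1/2) * (∫ x in (0:ℝ)..l, ((v x)^2 + a^2 * (u' x)^2))
        + (b/4) * (∫ x in (0:ℝ)..l, (u' x)^2)^2)
    (hG : G = ∫ x in (0:ℝ)..l, (u x * v x + δ * (u x)^2))
    (hμ₀ : μ₀ = (l / (Real.pi * a)) * (1 + 2 * δ * l / (Real.pi * a))) :
    |G| ≤ μ₀ * E := by
  have hpi := Real.pi_pos
  have hP : 0 < l/Real.pi := by positivity
  have ht : 0 < a/(l/Real.pi) := by positivity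
  have hu_cont : ContinuousOn u (Set.Icc 0 l) := fun x hx =>
    (hderiv x hx).continuousAt.continuousWithinAt
  have hu2int : IntervalIntegrable (fun x => (u x)^2) MeasureTheory.volume 0 l :=
    ((hu_cont.pow 2).mono (by rw [Set.uIcc_of_le hl.le])).intervalIntegrable
  have hu'2int : IntervalIntegrable (fun x => (u' x)^2) MeasureTheory.volume 0 l :=
    ((hcont.pow 2).mono (by rw [Set.uIcc_of_le hl.le])).intervalIntegrable
  have hIv0 : 0 ≤ ∫ x in (0:ℝ)..l, (v x)^2 :=
    intervalIntegral.integral_nonneg hl.le (fun x _ => sq_nonneg _)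
  have hI10 : 0 ≤ ∫ x in (0:ℝ)..l, (u' x)^2 :=
    intervalIntegral.integral_nonneg hl.le (fun x _ => sq_nonneg _)
  have hI20 : 0 ≤ ∫ x in (0:ℝ)..l, (u x)^2 :=
    intervalIntegral.integral_nonneg hl.le (fun x _ => sq_nonneg _)
  have hEsplit : (∫ x in (0:ℝ)..l, ((v x)^2 + a^2 * (u' x)^2))
      = (∫ x in (0:ℝ)..l, (v x)^2) + a^2 * (∫ x in (0:ℝ)..l, (u' x)^2) := by
    rw [intervalIntegral.integral_add hv2 (hu'2int.const_mul (a^2)),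
      intervalIntegral.integral_const_mul]
  have hGsplit : G = (∫ x in (0:ℝ)..l, u x * v x) + δ * (∫ x in (0:ℝ)..l, (u x)^2) := by
    rw [hG, intervalIntegral.integral_add huv (hu2int.const_mul δ),
      intervalIntegral.integral_const_mul]
  have hw := wirtinger' l hl u u' hderiv hcont h0 hle
  -- Cauchy-Schwarz via Young
  have hpt : |∫ x in (0:ℝ)..l, u x * v x|
      ≤ (a/(l/Real.pi))/2 * (∫ x in (0:ℝ)..l, (u x)^2)
        + 1/(2*(a/(l/Real.pi))) * (∫ x in (0:ℝ)..l, (v x)^2) := by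
    calc |∫ x in (0:ℝ)..l, u x * v x| ≤ ∫ x in (0:ℝ)..l, |u x * v x| :=
          intervalIntegral.abs_integral_le_integral_abs hl.le
      _ ≤ ∫ x in (0:ℝ)..l, ((a/(l/Real.pi))/2 * (u x)^2 + 1/(2*(a/(l/Real.pi))) * (v x)^2) := by
          apply intervalIntegral.integral_mono_on hl.le huv.abs
            ((hu2int.const_mul _).add (hv2.const_mul _))
          intro x _
          exact young' _ (u x) (v x) ht
      _ = (a/(l/Real.pi))/2 * (∫ x in (0:ℝ)..l, (u x)^2)
          + 1/(2*(a/(l/Real.pi))) * (∫ x in (0:ℝ)..l, (v x)^2) := by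
          rw [intervalIntegral.integral_add (hu2int.const_mul _) (hv2.const_mul _),
            intervalIntegral.integral_const_mul, intervalIntegral.integral_const_mul]
  have hGabs : |G| ≤ ((a/(l/Real.pi))/2 + δ) * (∫ x in (0:ℝ)..l, (u x)^2)
      + 1/(2*(a/(l/Real.pi))) * (∫ x in (0:ℝ)..l, (v x)^2) := by
    rw [hGsplit]
    calc |(∫ x in (0:ℝ)..l, u x * v x) + δ * (∫ x in (0:ℝ)..l, (u x)^2)|
        ≤ |∫ x in (0:ℝ)..l, u x * v x| + |δ * (∫ x in (0:ℝ)..l, (u x)^2)| := abs_add_le _ _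
      _ = |∫ x in (0:ℝ)..l, u x * v x| + δ * (∫ x in (0:ℝ)..l, (u x)^2) := by
          rw [abs_of_nonneg (mul_nonneg hδ.le hI20)]
      _ ≤ _ := by linarith [hpt]
  have hstep : ((a/(l/Real.pi))/2 + δ) * (∫ x in (0:ℝ)..l, (u x)^2)
      ≤ ((a/(l/Real.pi))/2 + δ) * ((l/Real.pi)^2 * (∫ x in (0:ℝ)..l, (u' x)^2)) :=
    mul_le_mul_of_nonneg_left hw (by positivity)
  have halg := final_algebra (l/Real.pi) a δ b (∫ x in (0:ℝ)..l, (u' x)^2)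
    (∫ x in (0:ℝ)..l, (v x)^2) hP ha hδ hb hI10 hIv0
  have hμE : μ₀ * E = ((l/Real.pi)/a)*(1+2*δ*(l/Real.pi)/a)
      * (1/2*((∫ x in (0:ℝ)..l, (v x)^2) + a^2*(∫ x in (0:ℝ)..l, (u' x)^2))
        + b/4*(∫ x in (0:ℝ)..l, (u' x)^2)^2) := by
    rw [hμ₀, hE, hEsplit]
    have h1 : l / (Real.pi * a) = (l/Real.pi)/a := by
      rw [div_div]
    have h2 : 2 * δ * l / (Real.pi * a) = 2*δ*(l/Real.pi)/a := by
      field_simp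
    rw [h1, h2]
  rw [hμE]
  linarith [hGabs, hstep, halg]
end

section
/- Under the hypotheses of the previous estimate, G ≥ -(l/(πa))·E, i.e. the functional G = ∫₀ˡ (u·v + δ u²) dx satisfies the lower bound G ≥ -(l/(πa))·E. -/
open Real intervalIntegral
open MeasureTheory Set in
lemma wirtinger_aux (l : ℝ) (hl : 0 < l) (u u' : ℝ → ℝ)
    (hderiv : ∀ x ∈ Set.Icc 0 l, HasDerivAt u (u' x) x)
    (hcont : ContinuousOn u' (Set.Icc 0 l))
    (h0 : u 0 = 0) (hle : u l = 0) :
    (Real.pi / l)^2 * (∫ x in (0:ℝ)..l, (u x)^2) ≤ ∫ x in (0:ℝ)..l, (u' x)^2 := by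
  set c : ℝ := Real.pi / l with hc_def
  have hc : 0 < c := div_pos Real.pi_pos hl
  have hcl : c * l = Real.pi := by
    rw [hc_def]; field_simp
  have hu_cont : ContinuousOn u (Set.Icc 0 l) := fun x hx =>
    (hderiv x hx).continuousAt.continuousWithinAt
  set f : ℝ → ℝ := fun x => (u' x)^2 - c^2 * (u x)^2 with hf_def
  have hf_cont : ContinuousOn f (Set.Icc 0 l) :=
    (hcont.pow 2).sub (continuousOn_const.mul (hu_cont.pow 2))
  obtain ⟨M, hM⟩ := isCompact_Icc.exists_bound_of_continuousOn hcont
  obtain ⟨K, hK⟩ := isCompact_Icc.exists_bound_of_continuousOn hf_cont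
  have h0mem : (0:ℝ) ∈ Set.Icc (0:ℝ) l := ⟨le_refl _, hl.le⟩
  have hlmem : l ∈ Set.Icc (0:ℝ) l := ⟨hl.le, le_refl _⟩
  have hM0 : 0 ≤ M := le_trans (norm_nonneg _) (hM 0 h0mem)
  have hK0 : 0 ≤ K := le_trans (norm_nonneg _) (hK 0 h0mem)
  have hu2 : IntervalIntegrable (fun x => (u x)^2) volume 0 l :=
    ((hu_cont.pow 2).mono (by rw [Set.uIcc_of_le hl.le])).intervalIntegrable
  have hu'2 : IntervalIntegrable (fun x => (u' x)^2) volume 0 l :=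
    ((hcont.pow 2).mono (by rw [Set.uIcc_of_le hl.le])).intervalIntegrable
  have hfint : IntervalIntegrable f volume 0 l :=
    (hf_cont.mono (by rw [Set.uIcc_of_le hl.le])).intervalIntegrable
  -- MVT bounds
  have hmvt : ∀ x ∈ Set.Icc (0:ℝ) l, ∀ y ∈ Set.Icc (0:ℝ) l, ‖u y - u x‖ ≤ M * ‖y - x‖ :=
    fun x hx y hy => (convex_Icc 0 l).norm_image_sub_le_of_norm_hasDerivWithin_le
      (fun z hz => (hderiv z hz).hasDerivWithinAt) hM hx hy
  -- cot bound
  have hcot : ∀ y : ℝ, 0 < y → y < Real.pi/2 → Real.cos y / Real.sin y ≤ 1 / y := by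
    intro y hy1 hy2
    have hcos : 0 < Real.cos y := Real.cos_pos_of_mem_Ioo ⟨by linarith [Real.pi_pos], hy2⟩
    have hsin : 0 < Real.sin y := Real.sin_pos_of_pos_of_lt_pi hy1 (by linarith [Real.pi_pos])
    have ht := Real.lt_tan hy1 hy2
    rw [Real.tan_eq_sin_div_cos] at ht
    rw [div_le_div_iff₀ hsin hy1]
    have : y * Real.cos y < Real.sin y := by
      calc y * Real.cos y < (Real.sin y / Real.cos y) * Real.cos y := by
            exact mul_lt_mul_of_pos_right ht hcos
        _ = Real.sin y := by field_simp
    nlinarith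
  -- key estimate for each small ε
  have key : ∀ ε : ℝ, 0 < ε → ε < l/2 →
      -((2*K + 2*M^2) * ε) ≤ ∫ x in (0:ℝ)..l, f x := by
    intro ε hε hεl
    have hεle : ε ≤ l - ε := by linarith
    have hsub : Set.Icc ε (l - ε) ⊆ Set.Icc 0 l := Set.Icc_subset_Icc (by linarith) (by linarith)
    have hsin : ∀ x ∈ Set.Icc ε (l-ε), 0 < Real.sin (c*x) := by
      intro x hx
      apply Real.sin_pos_of_pos_of_lt_pi
      · exact mul_pos hc (lt_of_lt_of_le hε hx.1)
      · have : c * x ≤ c * (l - ε) := by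
          exact mul_le_mul_of_nonneg_left hx.2 hc.le
        have h2 : c * (l - ε) < c * l := by
          apply mul_lt_mul_of_pos_left _ hc; linarith
        linarith [hcl ▸ (lt_of_le_of_lt this h2)]
    set w : ℝ → ℝ := fun x => (u x)^2 * (c * Real.cos (c*x) / Real.sin (c*x)) with hw_def
    set w' : ℝ → ℝ := fun x => 2 * u x * u' x * (c * Real.cos (c*x) / Real.sin (c*x))
      - (u x)^2 * (c^2 / Real.sin (c*x)^2) with hw'_def
    have hwderiv : ∀ x ∈ Set.Icc ε (l-ε), HasDerivAt w (w' x) x := by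
      intro x hx
      have hsx : Real.sin (c*x) ≠ 0 := (hsin x hx).ne'
      have hid : HasDerivAt (fun y : ℝ => c*y) c x := by
        simpa using (hasDerivAt_id x).const_mul c
      have hcos : HasDerivAt (fun y => Real.cos (c*y)) (-Real.sin (c*x) * c) x :=
        (Real.hasDerivAt_cos (c*x)).comp x hid
      have hsinx : HasDerivAt (fun y => Real.sin (c*y)) (Real.cos (c*x) * c) x :=
        (Real.hasDerivAt_sin (c*x)).comp x hid
      have hq : HasDerivAt (fun y => c * Real.cos (c*y) / Real.sin (c*y))
          ((c * (-Real.sin (c*x) * c) * Real.sin (c*x) - c * Real.cos (c*x) * (Real.cos (c*x) * c)) / Real.sin (c*x)^2) x :=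
        (hcos.const_mul c).div hsinx hsx
      have hu2d : HasDerivAt (fun y => (u y)^2) (2 * u x * u' x) x := by
        have := (hderiv x (hsub hx)).pow 2
        exact this.congr_deriv (by norm_num)
      have hpyth := Real.sin_sq_add_cos_sq (c*x)
      have hnum : c * (-Real.sin (c*x) * c) * Real.sin (c*x) - c * Real.cos (c*x) * (Real.cos (c*x) * c) = -c^2 := by
        linear_combination (-(c^2)) * hpyth
      have hd := hu2d.mul hq
      have h2 : w' x = 2 * u x * u' x * (c * Real.cos (c*x) / Real.sin (c*x)) + (u x)^2 * ((-c^2) / Real.sin (c*x)^2) := by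
        rw [hw'_def]; ring
      rw [hw_def, h2, ← hnum]
      exact hd
    have hw'cont : ContinuousOn w' (Set.Icc ε (l-ε)) := by
      apply ContinuousOn.sub
      · apply ContinuousOn.mul
        · exact (continuousOn_const.mul ((hu_cont.mono hsub))).mul (hcont.mono hsub)
        · apply ContinuousOn.div
          · exact continuousOn_const.mul (Real.continuous_cos.comp (continuous_const.mul continuous_id)).continuousOn
          · exact (Real.continuous_sin.comp (continuous_const.mul continuous_id)).continuousOn
          · exact fun x hx => (hsin x hx).ne'
      · apply ContinuousOn.mul
        · exact (hu_cont.mono hsub).pow 2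
        · apply ContinuousOn.div continuousOn_const
          · exact ((Real.continuous_sin.comp (continuous_const.mul continuous_id)).pow 2).continuousOn
          · exact fun x hx => pow_ne_zero 2 (hsin x hx).ne'
    have hw'int : IntervalIntegrable w' volume ε (l-ε) :=
      (hw'cont.mono (by rw [Set.uIcc_of_le hεle])).intervalIntegrable
    have hfint' : IntervalIntegrable f volume ε (l-ε) :=
      ((hf_cont.mono hsub).mono (by rw [Set.uIcc_of_le hεle])).intervalIntegrable
    have hFTC : ∫ x in ε..(l-ε), w' x = w (l-ε) - w ε := by
      apply intervalIntegral.integral_eq_sub_of_hasDerivAt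
      · intro x hx
        rw [Set.uIcc_of_le hεle] at hx
        exact hwderiv x hx
      · exact hw'int
    have hmono : ∫ x in ε..(l-ε), w' x ≤ ∫ x in ε..(l-ε), f x := by
      apply intervalIntegral.integral_mono_on hεle hw'int hfint'
      intro x hx
      have hsx : Real.sin (c*x) ≠ 0 := (hsin x hx).ne'
      have hq2 : (c * Real.cos (c*x) / Real.sin (c*x))^2 = c^2 / Real.sin (c*x)^2 - c^2 := by
        have hpyth := Real.sin_sq_add_cos_sq (c*x)
        field_simp
        nlinarith [hpyth]
      simp only [hw'_def, hf_def]
      nlinarith [sq_nonneg (u' x - u x * (c * Real.cos (c*x) / Real.sin (c*x))), hq2,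
        sq_nonneg (u x)]
    -- bounds on w ε and w (l-ε)
    have hεmem : ε ∈ Set.Icc (0:ℝ) l := ⟨hε.le, by linarith⟩
    have hlεmem : l - ε ∈ Set.Icc (0:ℝ) l := ⟨by linarith, by linarith⟩
    have huε : |u ε| ≤ M * ε := by
      have := hmvt 0 h0mem ε hεmem
      simpa [h0, abs_of_pos hε] using this
    have hulε : |u (l-ε)| ≤ M * ε := by
      have := hmvt l hlmem (l-ε) hlεmem
      simp only [hle, Real.norm_eq_abs] at this
      calc |u (l-ε)| = |u (l-ε) - 0| := by ring_nf
        _ ≤ M * |l - ε - l| := this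
        _ = M * ε := by rw [show l - ε - l = -ε by ring, abs_neg, abs_of_pos hε]
    have hcε1 : 0 < c * ε := mul_pos hc hε
    have hcε2 : c * ε < Real.pi / 2 := by
      have : c * ε < c * (l/2) := mul_lt_mul_of_pos_left hεl hc
      have h2 : c * (l/2) = Real.pi/2 := by rw [hc_def]; field_simp
      linarith
    have hsinε : 0 < Real.sin (c*ε) := Real.sin_pos_of_pos_of_lt_pi hcε1 (by linarith [Real.pi_pos])
    have hcosε : 0 < Real.cos (c*ε) := Real.cos_pos_of_mem_Ioo ⟨by linarith [Real.pi_pos], hcε2⟩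
    have hcotb : Real.cos (c*ε) / Real.sin (c*ε) ≤ 1 / (c*ε) := hcot _ hcε1 hcε2
    have hcotpos : 0 ≤ Real.cos (c*ε) / Real.sin (c*ε) := le_of_lt (div_pos hcosε hsinε)
    have hcb : c * (Real.cos (c*ε) / Real.sin (c*ε)) ≤ 1 / ε := by
      calc c * (Real.cos (c*ε) / Real.sin (c*ε)) ≤ c * (1/(c*ε)) :=
            mul_le_mul_of_nonneg_left hcotb hc.le
        _ = 1/ε := by field_simp
    have huε2 : (u ε)^2 ≤ (M*ε)^2 := by
      rw [← sq_abs]; exact pow_le_pow_left₀ (abs_nonneg _) huε 2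
    have hulε2 : (u (l-ε))^2 ≤ (M*ε)^2 := by
      rw [← sq_abs]; exact pow_le_pow_left₀ (abs_nonneg _) hulε 2
    have hwε : w ε ≤ M^2 * ε := by
      have : w ε = (u ε)^2 * (c * (Real.cos (c*ε) / Real.sin (c*ε))) := by
        rw [hw_def]; ring
      rw [this]
      calc (u ε)^2 * (c * (Real.cos (c*ε) / Real.sin (c*ε)))
          ≤ (M*ε)^2 * (1/ε) := by
            apply mul_le_mul huε2 hcb (by positivity) (by positivity)
        _ = M^2 * ε := by field_simp
    have hwlε : -(M^2 * ε) ≤ w (l-ε) := by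
      have harg : c * (l - ε) = Real.pi - c * ε := by
        rw [hc_def]; field_simp
      have : w (l-ε) = -((u (l-ε))^2 * (c * (Real.cos (c*ε) / Real.sin (c*ε)))) := by
        rw [hw_def]
        simp only [harg, Real.cos_pi_sub, Real.sin_pi_sub]
        ring
      rw [this, neg_le_neg_iff]
      calc (u (l-ε))^2 * (c * (Real.cos (c*ε) / Real.sin (c*ε)))
          ≤ (M*ε)^2 * (1/ε) := by
            apply mul_le_mul hulε2 hcb (by positivity) (by positivity)
        _ = M^2 * ε := by field_simp
    -- splitting
    have hf1 : IntervalIntegrable f volume 0 ε :=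
      hfint.mono_set (by rw [Set.uIcc_of_le hl.le, Set.uIcc_of_le hε.le]; exact Set.Icc_subset_Icc (le_refl _) (by linarith))
    have hf3 : IntervalIntegrable f volume (l-ε) l :=
      hfint.mono_set (by rw [Set.uIcc_of_le hl.le, Set.uIcc_of_le (by linarith : l-ε ≤ l)]; exact Set.Icc_subset_Icc (by linarith) (le_refl _))
    have hsplit : ∫ x in (0:ℝ)..l, f x
        = (∫ x in (0:ℝ)..ε, f x) + (∫ x in ε..(l-ε), f x) + ∫ x in (l-ε)..l, f x := by
      rw [intervalIntegral.integral_add_adjacent_intervals hf1 hfint', intervalIntegral.integral_add_adjacent_intervals (hf1.trans hfint') hf3]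
    have hb1 : |∫ x in (0:ℝ)..ε, f x| ≤ K * ε := by
      have := intervalIntegral.norm_integral_le_of_norm_le_const
        (C := K) (f := f) (a := (0:ℝ)) (b := ε) ?_
      · simpa [abs_of_pos hε] using this
      · intro x hx
        rw [Set.uIoc_of_le hε.le] at hx
        exact hK x ⟨hx.1.le, by linarith [hx.2]⟩
    have hb3 : |∫ x in (l-ε)..l, f x| ≤ K * ε := by
      have := intervalIntegral.norm_integral_le_of_norm_le_const
        (C := K) (f := f) (a := l-ε) (b := l) ?_
      · have h2 : |l - (l-ε)| = ε := by rw [show l - (l-ε) = ε by ring, abs_of_pos hε]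
        simpa [h2, abs_of_pos hε] using this
      · intro x hx
        rw [Set.uIoc_of_le (by linarith : l-ε ≤ l)] at hx
        exact hK x ⟨by linarith [hx.1], hx.2⟩
    have hmid : -(2*M^2*ε) ≤ ∫ x in ε..(l-ε), f x := by
      have := hFTC ▸ hmono
      linarith
    rw [hsplit]
    have := abs_le.mp hb1
    have := abs_le.mp hb3
    linarith
  -- conclude nonnegativity
  have hnonneg : 0 ≤ ∫ x in (0:ℝ)..l, f x := by
    by_contra h
    push_neg at h
    set I := ∫ x in (0:ℝ)..l, f x with hI
    set D : ℝ := 2*K + 2*M^2 with hD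
    have hD0 : 0 ≤ D := by positivity
    set ε : ℝ := min (l/4) ((-I)/(2*(D+1))) with hε_def
    have hε1 : 0 < ε := by
      apply lt_min (by linarith)
      apply div_pos (by linarith) (by linarith)
    have hε2 : ε < l/2 := lt_of_le_of_lt (min_le_left _ _) (by linarith)
    have hkey := key ε hε1 hε2
    have hεle : ε ≤ (-I)/(2*(D+1)) := min_le_right _ _
    have hDe : D * ε ≤ D * ((-I)/(2*(D+1))) := mul_le_mul_of_nonneg_left hεle hD0
    have h2 : D * ((-I)/(2*(D+1))) ≤ (-I)/2 := by
      rw [← mul_div_assoc, div_le_div_iff₀ (by linarith) (by norm_num : (0:ℝ) < 2)]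
      nlinarith
    nlinarith [hkey, hDe, h2, h]
  have hsplit2 : ∫ x in (0:ℝ)..l, f x
      = (∫ x in (0:ℝ)..l, (u' x)^2) - c^2 * ∫ x in (0:ℝ)..l, (u x)^2 := by
    rw [hf_def]
    rw [intervalIntegral.integral_sub hu'2 (hu2.const_mul _), intervalIntegral.integral_const_mul]
  rw [hsplit2] at hnonneg
  linarith


theorem G_lower_bound (l a b δ : ℝ) (hl : 0 < l) (ha : 0 < a) (hδ : 0 < δ) (hb : 0 ≤ b)
    (u u' v : ℝ → ℝ)
    (hderiv : ∀ x ∈ Set.Icc 0 l, HasDerivAt u (u' x) x)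
    (hcont : ContinuousOn u' (Set.Icc 0 l))
    (hv2 : IntervalIntegrable (fun x => (v x)^2) MeasureTheory.volume 0 l)
    (huv : IntervalIntegrable (fun x => u x * v x) MeasureTheory.volume 0 l)
    (h0 : u 0 = 0) (hle : u l = 0)
    (E G : ℝ)
    (hE : E = (1/2) * (∫ x in (0:ℝ)..l, ((v x)^2 + a^2 * (u' x)^2))
        + (b/4) * (∫ x in (0:ℝ)..l, (u' x)^2)^2)
    (hG : G = ∫ x in (0:ℝ)..l, (u x * v x + δ * (u x)^2)) :
    G ≥ -(l / (Real.pi * a)) * E := by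
  have hπ : 0 < Real.pi := Real.pi_pos
  have hu_cont : ContinuousOn u (Set.Icc 0 l) := fun x hx =>
    (hderiv x hx).continuousAt.continuousWithinAt
  have hu2 : IntervalIntegrable (fun x => (u x)^2) MeasureTheory.volume 0 l :=
    ((hu_cont.pow 2).mono (by rw [Set.uIcc_of_le hl.le])).intervalIntegrable
  have hu'2 : IntervalIntegrable (fun x => (u' x)^2) MeasureTheory.volume 0 l :=
    ((hcont.pow 2).mono (by rw [Set.uIcc_of_le hl.le])).intervalIntegrable
  set A := ∫ x in (0:ℝ)..l, (u x)^2 with hA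
  set B := ∫ x in (0:ℝ)..l, (v x)^2 with hB
  set C := ∫ x in (0:ℝ)..l, (u' x)^2 with hC
  have hA0 : 0 ≤ A := intervalIntegral.integral_nonneg hl.le (fun x _ => sq_nonneg _)
  have hB0 : 0 ≤ B := intervalIntegral.integral_nonneg hl.le (fun x _ => sq_nonneg _)
  have hC0 : 0 ≤ C := intervalIntegral.integral_nonneg hl.le (fun x _ => sq_nonneg _)
  have hwirt : (Real.pi / l)^2 * A ≤ C :=
    wirtinger_aux l hl u u' hderiv hcont h0 hle
  set lam : ℝ := Real.pi * a / l with hlam_def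
  have hlam : 0 < lam := by positivity
  -- split E
  have hEsplit : E = (1/2) * (B + a^2 * C) + (b/4) * C^2 := by
    rw [hE, intervalIntegral.integral_add hv2 (hu'2.const_mul (a^2)),
      intervalIntegral.integral_const_mul]
  -- split G
  have hGsplit : G = (∫ x in (0:ℝ)..l, u x * v x) + δ * A := by
    rw [hG, intervalIntegral.integral_add huv (hu2.const_mul δ),
      intervalIntegral.integral_const_mul]
  -- pointwise bound for ∫ u v
  have hpt : ∀ x ∈ Set.Icc (0:ℝ) l,
      -((lam/2) * (u x)^2 + (1/(2*lam)) * (v x)^2) ≤ u x * v x := by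
    intro x _
    have h2 : (0:ℝ) < 2 * lam := by linarith
    have hiden : u x * v x + ((lam/2) * (u x)^2 + (1/(2*lam)) * (v x)^2)
        = (lam * u x + v x)^2 / (2*lam) := by
      field_simp
      ring
    have hnn : 0 ≤ (lam * u x + v x)^2 / (2*lam) := div_nonneg (sq_nonneg _) h2.le
    linarith
  have hint : IntervalIntegrable
      (fun x => -((lam/2) * (u x)^2 + (1/(2*lam)) * (v x)^2)) MeasureTheory.volume 0 l :=
    ((hu2.const_mul (lam/2)).add (hv2.const_mul (1/(2*lam)))).neg
  have huv_lb : -((lam/2) * A + (1/(2*lam)) * B) ≤ ∫ x in (0:ℝ)..l, u x * v x := by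
    have := intervalIntegral.integral_mono_on hl.le hint huv hpt
    rwa [intervalIntegral.integral_neg,
      intervalIntegral.integral_add (hu2.const_mul (lam/2)) (hv2.const_mul (1/(2*lam))),
      intervalIntegral.integral_const_mul, intervalIntegral.integral_const_mul] at this
  -- arithmetic
  have hlaminv : 1/(2*lam) = l/(2*Real.pi*a) := by
    rw [hlam_def, eq_div_iff (by positivity)]
    field_simp
  have hAC : (lam/2) * A ≤ l*a/(2*Real.pi) * C := by
    have e1 : lam/2 * A = (a/(2*l*Real.pi)) * ((Real.pi/l)^2 * A * l^2) := by
      rw [hlam_def]; field_simp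
    have e2 : l*a/(2*Real.pi) * C = (a/(2*l*Real.pi)) * (C * l^2) := by
      field_simp
    rw [e1, e2]
    apply mul_le_mul_of_nonneg_left _ (by positivity)
    exact mul_le_mul_of_nonneg_right hwirt (by positivity)
  have hRHS : -(l / (Real.pi * a)) * E
      = -(l/(2*Real.pi*a) * B) - l*a/(2*Real.pi) * C - l*b/(4*Real.pi*a) * C^2 := by
    rw [hEsplit]; field_simp; ring
  have hbC : 0 ≤ l*b/(4*Real.pi*a) * C^2 := by positivity
  have hδA : 0 ≤ δ * A := by positivity
  rw [ge_iff_le, hRHS, hGsplit]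
  rw [hlaminv] at huv_lb
  linarith
end
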